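/- Let f : 𝔽₂ⁿ → 𝔽₂ⁿ (so m = n) be a generalised Simon function hiding the linear subspace S ≤ 𝔽₂ⁿ, with K = #S and N = 2ⁿ. Then for every z ∈ 𝔽₂ⁿ, the probability of obtaining z when the GPK algorithm is run with a marker y chosen uniformly at random from the nonzero strings 𝔽₂ⁿ \ {0}, namely p(z) = (1/(N − 1))·Σ_{y ∈ 𝔽₂ⁿ, y ≠ 0} ((1/N)·Σ_{x ∈ 𝔽₂ⁿ} (−1)^{y·f(x) + x·z})², equals (K − 1)/(N − 1) if z = 0; equals K/(N − 1) if z ≠ 0 and z·x = 0 for all x ∈ S; and equals 0 otherwise. -/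

import Mathlib

/-- The dot product of two vectors in `𝔽₂ᵏ`. -/
def dotp {k : ℕ} (u v : Fin k → ZMod 2) : ZMod 2 := ∑ i, u i * v i

open scoped Classical

noncomputable def chi (a : ZMod 2) : ℝ := (-1) ^ a.val

lemma chi_add (a b : ZMod 2) : chi (a + b) = chi a * chi b := by
  have h01 : ∀ c : ZMod 2, c = 0 ∨ c = 1 := by decide
  rcases h01 a with rfl | rfl <;> rcases h01 b with rfl | rfl <;> norm_num [chi, show ZMod.val (2:ZMod 2) = 0 by decide, ZMod.val_one]

lemma chi_zero : chi 0 = 1 := rfl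
lemma chi_one : chi 1 = -1 := by norm_num [chi, ZMod.val_one]

lemma zmod2_ne_zero : ∀ a : ZMod 2, a ≠ 0 → a = 1 := by decide

lemma dotp_comm {k} (u v : Fin k → ZMod 2) : dotp u v = dotp v u := by
  simp [dotp, mul_comm]

lemma dotp_add_left {k} (u v w : Fin k → ZMod 2) :
    dotp (u + v) w = dotp u w + dotp v w := by
  simp [dotp, add_mul, Finset.sum_add_distrib]

lemma dotp_add_right {k} (u v w : Fin k → ZMod 2) :
    dotp u (v + w) = dotp u v + dotp u w := by
  simp [dotp, mul_add, Finset.sum_add_distrib]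

lemma dotp_zero_left {k} (v : Fin k → ZMod 2) : dotp 0 v = 0 := by simp [dotp]
lemma dotp_zero_right {k} (v : Fin k → ZMod 2) : dotp v 0 = 0 := by simp [dotp]

lemma zmod2_add_self : ∀ a : ZMod 2, a + a = 0 := by decide

lemma vec_add_self {k} (a : Fin k → ZMod 2) : a + a = 0 := by
  funext i; exact zmod2_add_self _

lemma vec_add_eq_zero {k} (a b : Fin k → ZMod 2) : a + b = 0 ↔ a = b := by
  constructor
  · intro h
    have := congrArg (· + b) h
    simpa [add_assoc, vec_add_self] using this
  · intro h; subst h; exact vec_add_self a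

lemma card_vec (k : ℕ) : (Fintype.card (Fin k → ZMod 2)) = 2 ^ k := by
  simp

lemma sum_chi_dotp {k : ℕ} (w : Fin k → ZMod 2) :
    ∑ y : Fin k → ZMod 2, chi (dotp y w) = if w = 0 then ((2:ℝ)^k) else 0 := by
  by_cases h : w = 0
  · subst h
    simp only [dotp_zero_right, chi_zero, Finset.sum_const, Finset.card_univ,
      nsmul_eq_mul, mul_one, if_pos rfl, card_vec]
    push_cast; ring
  · rw [if_neg h]
    obtain ⟨i, hi⟩ : ∃ i, w i ≠ 0 := by
      by_contra hc; push_neg at hc; exact h (funext hc)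
    have hwi : w i = 1 := zmod2_ne_zero _ hi
    set e : Fin k → ZMod 2 := Pi.single i 1 with he
    have hde : dotp e w = 1 := by
      rw [dotp, Finset.sum_eq_single i]
      · simp [he, hwi]
      · intro j _ hj; simp [he, Pi.single_eq_of_ne hj]
      · simp
    have key : ∑ y : Fin k → ZMod 2, chi (dotp (e + y) w)
        = ∑ y : Fin k → ZMod 2, chi (dotp y w) :=
      Fintype.sum_equiv (Equiv.addLeft e) _ _ (fun y => rfl)
    have flip : ∀ y : Fin k → ZMod 2, chi (dotp (e + y) w) = - chi (dotp y w) := by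
      intro y
      rw [dotp_add_left, chi_add, hde, chi_one]; ring
    rw [Finset.sum_congr rfl (fun y _ => flip y)] at key
    rw [Finset.sum_neg_distrib] at key
    linarith

lemma sum_indicator_chi {k} (S : Submodule (ZMod 2) (Fin k → ZMod 2)) (z : Fin k → ZMod 2) :
    ∑ t : Fin k → ZMod 2, (if t ∈ S then chi (dotp t z) else 0) =
      if (∀ x ∈ S, dotp z x = 0) then (Nat.card S : ℝ) else 0 := by
  by_cases h : ∀ x ∈ S, dotp z x = 0
  · rw [if_pos h]
    have h1 : ∀ t : Fin k → ZMod 2,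
        (if t ∈ S then chi (dotp t z) else 0) = (if t ∈ S then (1:ℝ) else 0) := by
      intro t; split
      · rw [dotp_comm, h t ‹_›, chi_zero]
      · rfl
    rw [Finset.sum_congr rfl (fun t _ => h1 t), Finset.sum_boole]
    rw [Nat.card_eq_fintype_card, Fintype.card_subtype]
  · rw [if_neg h]
    push_neg at h
    obtain ⟨x₀, hx₀S, hx₀⟩ := h
    have hx₀z : dotp x₀ z = 1 := by rw [dotp_comm]; exact zmod2_ne_zero _ hx₀
    set g : (Fin k → ZMod 2) → ℝ := fun t => if t ∈ S then chi (dotp t z) else 0 with hg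
    have e1 : ∑ t, g (x₀ + t) = ∑ t, g t :=
      Fintype.sum_equiv (Equiv.addLeft x₀) _ _ (fun t => rfl)
    have e2 : ∀ t, g (x₀ + t) = - g t := by
      intro t
      simp only [hg]
      rw [Submodule.add_mem_iff_right _ hx₀S, dotp_add_left, chi_add, hx₀z, chi_one]
      split <;> ring
    rw [Finset.sum_congr rfl (fun t _ => e2 t), Finset.sum_neg_distrib] at e1
    linarith

/-- For a generalised Simon function `f : 𝔽₂ⁿ → 𝔽₂ⁿ` hiding the subspace `S` with
`K = #S` and `N = 2ⁿ`, the probability of obtaining `z` when the GPK algorithm is run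
with a uniformly random nonzero marker `y ∈ 𝔽₂ⁿ \ {0}` is `(K − 1)/(N − 1)` if `z = 0`,
`K/(N − 1)` if `z ≠ 0` and `z` is orthogonal to `S`, and `0` otherwise. -/
theorem gpk_simon_nonzero_random_marker_probability (n : ℕ)
    (f : (Fin n → ZMod 2) → Fin n → ZMod 2)
    (S : Submodule (ZMod 2) (Fin n → ZMod 2))
    (hS : ∀ x x' : Fin n → ZMod 2, f x = f x' ↔ x + x' ∈ S)
    (K N : ℕ) (hK : K = Nat.card S) (hN : N = 2 ^ n) (z : Fin n → ZMod 2) :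
    (1 / ((N : ℝ) - 1)) *
        ∑ y ∈ Finset.univ.filter (fun y : Fin n → ZMod 2 => y ≠ 0),
          ((1 / (N : ℝ)) *
            ∑ x : Fin n → ZMod 2, (-1 : ℝ) ^ (dotp y (f x) + dotp x z).val) ^ 2 =
      if z = 0 then ((K : ℝ) - 1) / ((N : ℝ) - 1)
      else if ∀ x ∈ S, dotp z x = 0 then (K : ℝ) / ((N : ℝ) - 1)
      else 0 := by
  subst hK hN
  have hNe : ((2^n : ℕ) : ℝ) = (2:ℝ)^n := by push_cast; ring
  simp only [show ∀ a : ZMod 2, (-1:ℝ)^a.val = chi a from fun a => rfl, hNe]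
  set Nr : ℝ := (2:ℝ)^n with hNrdef
  have hNr0 : Nr ≠ 0 := by positivity
  have hfilter : (Finset.univ.filter (fun y : Fin n → ZMod 2 => y ≠ 0))
      = Finset.univ.erase 0 := Finset.filter_ne' Finset.univ 0
  rw [hfilter, Finset.sum_erase_eq_sub (Finset.mem_univ (0 : Fin n → ZMod 2))]
  have hA0 : ((1/Nr) * ∑ x : Fin n → ZMod 2,
      chi (dotp (0 : Fin n → ZMod 2) (f x) + dotp x z)) = if z = 0 then (1:ℝ) else 0 := by
    simp only [dotp_zero_left, zero_add]
    rw [sum_chi_dotp]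
    split
    · field_simp; exact hNrdef.symm
    · ring
  have total : (∑ y : Fin n → ZMod 2,
      ((1/Nr) * ∑ x : Fin n → ZMod 2, chi (dotp y (f x) + dotp x z))^2)
      = if (∀ x ∈ S, dotp z x = 0) then (Nat.card S : ℝ) else 0 := by
    have expand : ∀ y : Fin n → ZMod 2,
        ((1/Nr) * ∑ x : Fin n → ZMod 2, chi (dotp y (f x) + dotp x z))^2
        = (1/Nr)^2 * ∑ x : Fin n → ZMod 2, ∑ x' : Fin n → ZMod 2,
            chi (dotp y (f x + f x')) * chi (dotp (x + x') z) := by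
      intro y
      rw [mul_pow]
      congr 1
      rw [sq, Finset.sum_mul_sum]
      refine Finset.sum_congr rfl fun x _ => Finset.sum_congr rfl fun x' _ => ?_
      simp only [chi_add, dotp_add_left, dotp_add_right]
      ring
    rw [Finset.sum_congr rfl fun y _ => expand y, ← Finset.mul_sum, Finset.sum_comm]
    have swap2 : ∀ x : Fin n → ZMod 2,
        (∑ y : Fin n → ZMod 2, ∑ x' : Fin n → ZMod 2,
          chi (dotp y (f x + f x')) * chi (dotp (x + x') z))
        = ∑ x' : Fin n → ZMod 2, (if x + x' ∈ S then Nr * chi (dotp (x + x') z) else 0) := by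
      intro x
      rw [Finset.sum_comm]
      refine Finset.sum_congr rfl fun x' _ => ?_
      rw [← Finset.sum_mul, sum_chi_dotp]
      by_cases hm : x + x' ∈ S
      · rw [if_pos (((vec_add_eq_zero _ _).trans (hS x x')).mpr hm), if_pos hm]
      · rw [if_neg (fun hh => hm (((vec_add_eq_zero _ _).trans (hS x x')).mp hh)),
          if_neg hm, zero_mul]
    rw [Finset.sum_congr rfl fun x _ => swap2 x]
    have reindex : ∀ x : Fin n → ZMod 2,
        (∑ x' : Fin n → ZMod 2, (if x + x' ∈ S then Nr * chi (dotp (x + x') z) else 0))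
        = ∑ t : Fin n → ZMod 2, (if t ∈ S then Nr * chi (dotp t z) else 0) :=
      fun x => Fintype.sum_equiv (Equiv.addLeft x) _ _ (fun t => rfl)
    rw [Finset.sum_congr rfl fun x _ => reindex x, Finset.sum_const, Finset.card_univ,
      card_vec, nsmul_eq_mul, hNe]
    have pullNr : (∑ t : Fin n → ZMod 2, (if t ∈ S then Nr * chi (dotp t z) else 0))
        = Nr * ∑ t : Fin n → ZMod 2, (if t ∈ S then chi (dotp t z) else 0) := by
      rw [Finset.mul_sum]
      exact Finset.sum_congr rfl fun t _ => by split <;> simp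
    rw [pullNr, sum_indicator_chi]
    split
    · field_simp
    · field_simp
  rw [total, hA0]
  by_cases hz : z = 0
  · have horth : ∀ x ∈ S, dotp z x = 0 := fun x _ => by rw [hz]; exact dotp_zero_left x
    rw [if_pos horth, if_pos hz, if_pos hz]
    ring
  · rw [if_neg hz, if_neg hz]
    by_cases horth : ∀ x ∈ S, dotp z x = 0
    · rw [if_pos horth, if_pos horth]; ring
    · rw [if_neg horth, if_neg horth]; ring
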